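/- Exactness of the higher-order 2D rectangular sequence: 0 → ℝ → P_{k+1,k+1} →^curl P_{k+1,k} × P_{k,k+1} →^div P_{k,k} → 0, for any k ≥ 0. -/

import Mathlib

/-!
Polynomial functions on `ℝ²` are determined by their coefficient arrays (a one-variable
polynomial vanishing on `ℝ` is zero), and `∂ₓ`, `∂ᵧ` act on coefficients by shifting and
scaling, so every claim becomes coefficient arithmetic. A curl-free `s` has both partial
derivatives zero and is therefore constant. A divergence-free `(p, q)` is the curl of the
explicit potential `∫₀ʸ p(x, t) dt - ∫₀ˣ q(t, 0) dt`, whose degrees stay within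
`P_{k+1,k+1}`; and `div` is onto since each `f ∈ P_{k,k}` is `∂ₓ` of its `x`-antiderivative
in `P_{k+1,k}`.
-/

/-- `P_{a,b}`: polynomials in `x, y` of degree ≤ a in `x` and ≤ b in `y`. -/
def Pab (a b : ℕ) : Set (ℝ → ℝ → ℝ) :=
  {f | ∃ c : Fin (a + 1) → Fin (b + 1) → ℝ, ∀ x y : ℝ,
    f x y = ∑ i : Fin (a + 1), ∑ j : Fin (b + 1), c i j * x ^ (i : ℕ) * y ^ (j : ℕ)}

/-- `curl u = (∂₂u, −∂₁u)` for a scalar function `u` -/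
noncomputable def curl2 (s : ℝ → ℝ → ℝ) : ℝ → ℝ → ℝ × ℝ :=
  fun x y => (deriv (fun t => s x t) y, -deriv (fun t => s t y) x)

/-- the divergence `∂₁q₁ + ∂₂q₂` -/
noncomputable def dv (q : ℝ → ℝ → ℝ × ℝ) : ℝ → ℝ → ℝ :=
  fun x y => deriv (fun t => (q t y).1) x + deriv (fun t => (q x t).2) y

open Finset

def polyFun {m n : ℕ} (c : Fin m → Fin n → ℝ) (x y : ℝ) : ℝ :=
  ∑ i, ∑ j, c i j * x ^ (i : ℕ) * y ^ (j : ℕ)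

def coeffDerivX {m n : ℕ} (c : Fin (m + 1) → Fin n → ℝ) : Fin m → Fin n → ℝ :=
  fun i j => ((i : ℕ) + 1) * c i.succ j

def coeffDerivY {m n : ℕ} (c : Fin m → Fin (n + 1) → ℝ) : Fin m → Fin n → ℝ :=
  fun i j => ((j : ℕ) + 1) * c i j.succ

noncomputable def coeffAntiderivX {m n : ℕ} (c : Fin m → Fin n → ℝ) : Fin (m + 1) → Fin n → ℝ :=
  fun i j => Fin.cases 0 (fun i' => c i' j / ((i' : ℕ) + 1)) i

/-- The coefficients of `s(x, y) = ∫₀ʸ p(x, t) dt - ∫₀ˣ q(t, 0) dt` for `p = polyFun a`,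
`q = polyFun b`; when `div (p, q) = 0` this `s` satisfies `curl s = (p, q)`. -/
noncomputable def curlPotentialCoeff {m n : ℕ} (a : Fin (m + 1) → Fin n → ℝ)
    (b : Fin m → Fin (n + 1) → ℝ) : Fin (m + 1) → Fin (n + 1) → ℝ :=
  fun i => Fin.cases (Fin.cases 0 (fun i' => -b i' 0 / ((i' : ℕ) + 1)) i)
    (fun j' => a i j' / ((j' : ℕ) + 1))

section polyFun

variable {m n : ℕ}

theorem mem_Pab_iff {a b : ℕ} {f : ℝ → ℝ → ℝ} :
    f ∈ Pab a b ↔ ∃ c : Fin (a + 1) → Fin (b + 1) → ℝ, f = polyFun c :=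
  ⟨fun ⟨c, hc⟩ => ⟨c, funext₂ hc⟩, fun ⟨c, hc⟩ => ⟨c, fun x y => by rw [hc]; rfl⟩⟩

theorem polyFun_mem_Pab {a b : ℕ} (c : Fin (a + 1) → Fin (b + 1) → ℝ) : polyFun c ∈ Pab a b :=
  mem_Pab_iff.2 ⟨c, rfl⟩

theorem mem_Pab_prod_iff {a₁ b₁ a₂ b₂ : ℕ} {q : ℝ → ℝ → ℝ × ℝ} :
    ((fun x y => (q x y).1) ∈ Pab a₁ b₁ ∧ (fun x y => (q x y).2) ∈ Pab a₂ b₂) ↔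
      ∃ (c : Fin (a₁ + 1) → Fin (b₁ + 1) → ℝ) (d : Fin (a₂ + 1) → Fin (b₂ + 1) → ℝ),
        q = fun x y => (polyFun c x y, polyFun d x y) := by
  simp only [mem_Pab_iff]
  constructor
  · rintro ⟨⟨c, hc⟩, ⟨d, hd⟩⟩
    exact ⟨c, d, funext₂ fun x y => Prod.ext (congrFun₂ hc x y) (congrFun₂ hd x y)⟩
  · rintro ⟨c, d, rfl⟩
    exact ⟨⟨c, rfl⟩, ⟨d, rfl⟩⟩

theorem const_mem_Pab {a b : ℕ} (r : ℝ) : (fun _ _ => r) ∈ Pab a b :=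
  ⟨fun i j => if i = 0 then if j = 0 then r else 0 else 0, fun x y => by
    simp [ite_mul, sum_ite_eq']⟩

theorem polyFun_add (c d : Fin m → Fin n → ℝ) : polyFun (c + d) = polyFun c + polyFun d := by
  funext x y
  simp [polyFun, add_mul, sum_add_distrib]

theorem polyFun_neg (c : Fin m → Fin n → ℝ) : polyFun (-c) = -polyFun c := by
  funext x y
  simp [polyFun, neg_mul, sum_neg_distrib]

theorem polyFun_zero : polyFun (0 : Fin m → Fin n → ℝ) = 0 := by
  funext x y
  simp [polyFun]

theorem eq_zero_of_forall_sum_mul_pow_eq_zero {c : Fin n → ℝ}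
    (h : ∀ x : ℝ, ∑ i, c i * x ^ (i : ℕ) = 0) : c = 0 := by
  classical
  apply Polynomial.injective_ofFn n
  rw [map_zero]
  refine Polynomial.funext fun x => ?_
  simp [Polynomial.ofFn_eq_sum_monomial, Polynomial.eval_finsetSum, h x]

theorem eq_zero_of_polyFun_eq_zero {c : Fin m → Fin n → ℝ} (h : polyFun c = 0) : c = 0 := by
  have hrow : ∀ x, (fun j => ∑ i, c i j * x ^ (i : ℕ)) = 0 := fun x =>
    eq_zero_of_forall_sum_mul_pow_eq_zero fun y => by
      have := congrFun₂ h x y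
      simp only [polyFun, Pi.zero_apply] at this
      rw [← this, sum_comm]
      simp only [sum_mul]
  funext i j
  exact congrFun (eq_zero_of_forall_sum_mul_pow_eq_zero fun x => congrFun (hrow x) j) i

theorem hasDerivAt_polyFun_x (c : Fin (m + 1) → Fin n → ℝ) (x y : ℝ) :
    HasDerivAt (fun t => polyFun c t y) (polyFun (coeffDerivX c) x y) x := by
  have h := HasDerivAt.fun_sum (u := univ) fun (i : Fin (m + 1)) _ =>
    HasDerivAt.fun_sum (u := univ) fun (j : Fin n) _ =>
      ((hasDerivAt_pow (i : ℕ) x).const_mul (c i j)).mul_const (y ^ (j : ℕ))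
  refine h.congr_deriv ?_
  rw [Fin.sum_univ_succ]
  simp only [Fin.val_zero, Nat.cast_zero, zero_mul, mul_zero, sum_const_zero, zero_add,
    Fin.val_succ, Nat.cast_add, Nat.cast_one, Nat.add_sub_cancel, polyFun, coeffDerivX]
  refine sum_congr rfl fun i _ => sum_congr rfl fun j _ => ?_
  ring

theorem hasDerivAt_polyFun_y (c : Fin m → Fin (n + 1) → ℝ) (x y : ℝ) :
    HasDerivAt (fun t => polyFun c x t) (polyFun (coeffDerivY c) x y) y := by
  have h := HasDerivAt.fun_sum (u := univ) fun (i : Fin m) _ =>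
    HasDerivAt.fun_sum (u := univ) fun (j : Fin (n + 1)) _ =>
      (hasDerivAt_pow (j : ℕ) y).const_mul (c i j * x ^ (i : ℕ))
  refine h.congr_deriv (sum_congr rfl fun i _ => ?_)
  rw [Fin.sum_univ_succ]
  simp only [Fin.val_zero, Nat.cast_zero, zero_mul, mul_zero, zero_add,
    Fin.val_succ, Nat.cast_add, Nat.cast_one, Nat.add_sub_cancel, coeffDerivY]
  refine sum_congr rfl fun j _ => ?_
  ring

theorem curl2_polyFun (c : Fin (m + 1) → Fin (n + 1) → ℝ) :
    curl2 (polyFun c) =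
      fun x y => (polyFun (coeffDerivY c) x y, polyFun (-coeffDerivX c) x y) := by
  funext x y
  simp only [curl2, (hasDerivAt_polyFun_x c x y).deriv, (hasDerivAt_polyFun_y c x y).deriv,
    polyFun_neg, Pi.neg_apply]

theorem dv_polyFun (a : Fin (m + 1) → Fin n → ℝ) (b : Fin m → Fin (n + 1) → ℝ) :
    dv (fun x y => (polyFun a x y, polyFun b x y)) = polyFun (coeffDerivX a + coeffDerivY b) := by
  funext x y
  simp only [dv, (hasDerivAt_polyFun_x a x y).deriv, (hasDerivAt_polyFun_y b x y).deriv,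
    polyFun_add, Pi.add_apply]

theorem coeffDerivX_coeffDerivY_comm (c : Fin (m + 1) → Fin (n + 1) → ℝ) :
    coeffDerivX (coeffDerivY c) = coeffDerivY (coeffDerivX c) := by
  funext i j
  simp only [coeffDerivX, coeffDerivY]
  ring

theorem coeffDerivY_neg (c : Fin m → Fin (n + 1) → ℝ) : coeffDerivY (-c) = -coeffDerivY c := by
  funext i j
  simp [coeffDerivY]

theorem coeffDerivY_zero : coeffDerivY (0 : Fin m → Fin (n + 1) → ℝ) = 0 := by
  funext i j
  simp [coeffDerivY]

theorem coeffDerivX_coeffAntiderivX (c : Fin m → Fin n → ℝ) :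
    coeffDerivX (coeffAntiderivX c) = c := by
  funext i j
  have hi : ((i : ℕ) : ℝ) + 1 ≠ 0 := by positivity
  simp only [coeffDerivX, coeffAntiderivX, Fin.cases_succ]
  field_simp

theorem coeffDerivY_curlPotentialCoeff (a : Fin (m + 1) → Fin n → ℝ)
    (b : Fin m → Fin (n + 1) → ℝ) : coeffDerivY (curlPotentialCoeff a b) = a := by
  funext i j
  have hj : ((j : ℕ) : ℝ) + 1 ≠ 0 := by positivity
  simp only [coeffDerivY, curlPotentialCoeff, Fin.cases_succ]
  field_simp

theorem coeffDerivX_curlPotentialCoeff {a : Fin (m + 1) → Fin n → ℝ}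
    {b : Fin m → Fin (n + 1) → ℝ} (h : coeffDerivX a + coeffDerivY b = 0) :
    coeffDerivX (curlPotentialCoeff a b) = -b := by
  funext i j
  have hi : ((i : ℕ) : ℝ) + 1 ≠ 0 := by positivity
  induction j using Fin.cases with
  | zero =>
    simp only [coeffDerivX, curlPotentialCoeff, Fin.cases_zero, Fin.cases_succ, Pi.neg_apply]
    field_simp
  | succ j =>
    have hj : ((j : ℕ) : ℝ) + 1 ≠ 0 := by positivity
    have hij := congrFun₂ h i j
    simp only [coeffDerivX, coeffDerivY, Pi.add_apply, Pi.zero_apply] at hij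
    simp only [coeffDerivX, curlPotentialCoeff, Fin.cases_succ, Pi.neg_apply]
    field_simp
    linarith

end polyFun

theorem eq_const_of_curl2_eq_zero {s : ℝ → ℝ → ℝ} (hx : ∀ y, Differentiable ℝ (fun t => s t y))
    (hy : Differentiable ℝ (s 0)) (h : curl2 s = fun _ _ => (0, 0)) :
    s = fun _ _ => s 0 0 := by
  funext x y
  have hdx : ∀ t, deriv (fun t => s t y) t = 0 := fun t => by
    simpa [curl2] using congrArg Prod.snd (congrFun₂ h t y)
  have hdy : ∀ t, deriv (s 0) t = 0 := fun t => by
    simpa [curl2] using congrArg Prod.fst (congrFun₂ h 0 t)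
  calc s x y = s 0 y := is_const_of_deriv_eq_zero (hx y) hdx x 0
    _ = s 0 0 := is_const_of_deriv_eq_zero hy hdy y 0

/-- Exactness of the higher-order 2D rectangular sequence
`0 → ℝ → P_{k+1,k+1} → P_{k+1,k} × P_{k,k+1} → P_{k,k} → 0` for every `k ≥ 0`:
the kernel of `curl` on `P_{k+1,k+1}` is the constants, the image of `curl`
equals the kernel of `div` in `P_{k+1,k} × P_{k,k+1}`, and `div` maps
`P_{k+1,k} × P_{k,k+1}` onto `P_{k,k}`. -/
theorem stmt_17 (k : ℕ) :
    ({s ∈ Pab (k + 1) (k + 1) | curl2 s = fun _ _ => (0, 0)}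
        = {s | ∃ c : ℝ, s = fun _ _ => c}) ∧
    ({q | ∃ s ∈ Pab (k + 1) (k + 1), q = curl2 s}
        = {q | ((fun x y => (q x y).1) ∈ Pab (k + 1) k
              ∧ (fun x y => (q x y).2) ∈ Pab k (k + 1))
            ∧ dv q = fun _ _ => 0}) ∧
    ({g | ∃ q : ℝ → ℝ → ℝ × ℝ,
        ((fun x y => (q x y).1) ∈ Pab (k + 1) k
          ∧ (fun x y => (q x y).2) ∈ Pab k (k + 1)) ∧ g = dv q}
        = Pab k k) := by
  refine ⟨Set.ext fun s => ⟨?_, ?_⟩, Set.ext fun q => ⟨?_, ?_⟩, Set.ext fun g => ⟨?_, ?_⟩⟩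
  · rintro ⟨hs, hcurl⟩
    obtain ⟨c, rfl⟩ := mem_Pab_iff.1 hs
    exact ⟨polyFun c 0 0, eq_const_of_curl2_eq_zero
      (fun y x => (hasDerivAt_polyFun_x c x y).differentiableAt)
      (fun y => (hasDerivAt_polyFun_y c 0 y).differentiableAt) hcurl⟩
  · rintro ⟨r, rfl⟩
    exact ⟨const_mem_Pab r, funext₂ fun x y => by simp [curl2]⟩
  · rintro ⟨s, hs, rfl⟩
    obtain ⟨c, rfl⟩ := mem_Pab_iff.1 hs
    rw [curl2_polyFun]
    refine ⟨mem_Pab_prod_iff.2 ⟨_, _, rfl⟩, ?_⟩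
    rw [dv_polyFun, coeffDerivX_coeffDerivY_comm, coeffDerivY_neg, add_neg_cancel]
    exact polyFun_zero
  · rintro ⟨hq, hdiv⟩
    obtain ⟨a, b, rfl⟩ := mem_Pab_prod_iff.1 hq
    rw [dv_polyFun] at hdiv
    refine ⟨_, polyFun_mem_Pab (curlPotentialCoeff a b), ?_⟩
    rw [curl2_polyFun, coeffDerivY_curlPotentialCoeff,
      coeffDerivX_curlPotentialCoeff (eq_zero_of_polyFun_eq_zero hdiv), neg_neg]
  · rintro ⟨q, hq, rfl⟩
    obtain ⟨a, b, rfl⟩ := mem_Pab_prod_iff.1 hq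
    rw [dv_polyFun]
    exact polyFun_mem_Pab _
  · intro hg
    obtain ⟨c, rfl⟩ := mem_Pab_iff.1 hg
    refine ⟨fun x y => (polyFun (coeffAntiderivX c) x y, polyFun 0 x y),
      mem_Pab_prod_iff.2 ⟨_, _, rfl⟩, ?_⟩
    rw [dv_polyFun, coeffDerivX_coeffAntiderivX, coeffDerivY_zero, add_zero]
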